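/- For every natural number m there exists a constant C = C(m) such that for every integer A ≥ 3, the half-open interval (log A, C·log A] contains at least m distinct primes none of which divides A. -/
import Mathlib

open Finset

/-- prime counting: number of primes `< k`. -/
def pc (k : ℕ) : ℕ := ((Finset.range k).filter Nat.Prime).card

lemma pc_mono : Monotone pc := fun a b h =>
  Finset.card_le_card (Finset.filter_subset_filter _ (Finset.range_subset_range.2 h))

lemma chebLow (n : ℕ) (hn : 4 ≤ n) : 4 ^ n ≤ (2 * n) ^ (pc (2 * n + 1) + 1) := by
  have h1 : Nat.centralBinom n ≤ (2 * n) ^ pc (2 * n + 1) := by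
    rw [← Nat.prod_pow_factorization_centralBinom n,
      ← Finset.prod_filter_mul_prod_filter_not (Finset.range (2 * n + 1)) Nat.Prime]
    have h2 : ∏ p ∈ (Finset.range (2 * n + 1)).filter (fun p => ¬ p.Prime),
        p ^ (Nat.centralBinom n).factorization p = 1 := by
      apply Finset.prod_eq_one
      intro p hp
      rw [Nat.factorization_eq_zero_of_not_prime _ (Finset.mem_filter.1 hp).2, pow_zero]
    rw [h2, mul_one]
    apply Finset.prod_le_pow_card
    intro p _
    rw [Nat.centralBinom]
    exact Nat.pow_factorization_choose_le (by omega)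
  calc 4 ^ n ≤ n * Nat.centralBinom n := (Nat.four_pow_lt_mul_centralBinom n hn).le
    _ ≤ (2 * n) * (2 * n) ^ pc (2 * n + 1) :=
      Nat.mul_le_mul (by omega) h1
    _ = (2 * n) ^ (pc (2 * n + 1) + 1) := by ring

lemma chebUp (M : ℕ) :
    (Nat.sqrt M + 1) ^ ((Finset.Ioc (Nat.sqrt M) M).filter Nat.Prime).card ≤ 4 ^ M := by
  calc (Nat.sqrt M + 1) ^ ((Finset.Ioc (Nat.sqrt M) M).filter Nat.Prime).card
      ≤ ∏ p ∈ (Finset.Ioc (Nat.sqrt M) M).filter Nat.Prime, p := by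
        apply Finset.pow_card_le_prod
        intro p hp
        have := (Finset.mem_Ioc.1 (Finset.mem_filter.1 hp).1).1
        omega
    _ ≤ primorial M := by
        apply Finset.prod_le_prod_of_subset_of_one_le'
        · apply Finset.filter_subset_filter
          intro p hp
          have := Finset.mem_Ioc.1 hp
          exact Finset.mem_range.2 (by omega)
        · intro p hp _
          exact ((Finset.mem_filter.1 hp).2).one_lt.le
    _ ≤ 4 ^ M := primorial_le_4_pow M

lemma pcSplit (M : ℕ) :
    pc (M + 1) ≤ (Nat.sqrt M + 1) + ((Finset.Ioc (Nat.sqrt M) M).filter Nat.Prime).card := by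
  have hsub : (Finset.range (M + 1)).filter Nat.Prime ⊆
      (Finset.range (Nat.sqrt M + 1)).filter Nat.Prime ∪
        (Finset.Ioc (Nat.sqrt M) M).filter Nat.Prime := by
    intro p hp
    obtain ⟨hpr, hpp⟩ := Finset.mem_filter.1 hp
    rw [Finset.mem_range] at hpr
    rcases le_or_gt p (Nat.sqrt M) with h | h
    · exact Finset.mem_union_left _ (Finset.mem_filter.2 ⟨Finset.mem_range.2 (by omega), hpp⟩)
    · exact Finset.mem_union_right _
        (Finset.mem_filter.2 ⟨Finset.mem_Ioc.2 ⟨h, by omega⟩, hpp⟩)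
  calc pc (M + 1) ≤ _ := Finset.card_le_card hsub
    _ ≤ _ := Finset.card_union_le _ _
    _ ≤ _ := by
        gcongr
        calc ((Finset.range (Nat.sqrt M + 1)).filter Nat.Prime).card
            ≤ (Finset.range (Nat.sqrt M + 1)).card := Finset.card_filter_le _ _
          _ = Nat.sqrt M + 1 := Finset.card_range _

lemma log_four_gt_one : (1 : ℝ) < Real.log 4 := by
  have h2 : Real.log 4 = 2 * Real.log 2 := by
    rw [show (4:ℝ) = 2^(2:ℕ) by norm_num, Real.log_pow]; push_cast; ring
  have := Real.log_two_gt_d9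
  rw [h2]; linarith

lemma log_four_lt : Real.log 4 < 1.5 := by
  have h2 : Real.log 4 = 2 * Real.log 2 := by
    rw [show (4:ℝ) = 2^(2:ℕ) by norm_num, Real.log_pow]; push_cast; ring
  have := Real.log_two_lt_d9
  rw [h2]; linarith

lemma rLow (y : ℝ) (hy : 8 ≤ y) : (y - 2) / (2 * Real.log y) - 1 ≤ (pc (⌊y⌋₊ + 1) : ℝ) := by
  set N := ⌊y⌋₊ with hN
  have hy0 : (0:ℝ) ≤ y := by linarith
  have hN8 : 8 ≤ N := Nat.le_floor (by exact_mod_cast hy)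
  set n := N / 2 with hn
  have hn4 : 4 ≤ n := by omega
  have key : 4 ^ n ≤ (2 * n) ^ (pc (N + 1) + 1) := by
    calc 4 ^ n ≤ (2 * n) ^ (pc (2 * n + 1) + 1) := chebLow n hn4
      _ ≤ (2 * n) ^ (pc (N + 1) + 1) := by
          apply Nat.pow_le_pow_right (by omega)
          have : 2 * n + 1 ≤ N + 1 := by omega
          exact Nat.add_le_add_right (pc_mono (by omega)) 1
  have keyR : (4:ℝ) ^ n ≤ ((2 * n : ℕ) : ℝ) ^ (pc (N + 1) + 1) := by exact_mod_cast key
  have h2n0 : (0:ℝ) < ((2 * n : ℕ) : ℝ) := by positivity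
  have hlog : (n : ℝ) * Real.log 4 ≤ ((pc (N + 1) : ℝ) + 1) * Real.log ((2 * n : ℕ) : ℝ) := by
    have := Real.log_le_log (by positivity) keyR
    rw [Real.log_pow, Real.log_pow] at this
    push_cast at this ⊢
    linarith
  have h2nN : ((2 * n : ℕ) : ℝ) ≤ y := by
    have h1 : (2 * n : ℕ) ≤ N := by omega
    have h2 : (N : ℝ) ≤ y := Nat.floor_le hy0
    calc ((2 * n : ℕ) : ℝ) ≤ (N : ℝ) := by exact_mod_cast h1
      _ ≤ y := h2
  have hlogy : Real.log ((2 * n : ℕ) : ℝ) ≤ Real.log y := Real.log_le_log h2n0 h2nN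
  have hlogy0 : 0 < Real.log y := Real.log_pos (by linarith)
  have hstep : (n : ℝ) * Real.log 4 ≤ ((pc (N + 1) : ℝ) + 1) * Real.log y := by
    calc (n : ℝ) * Real.log 4 ≤ ((pc (N + 1) : ℝ) + 1) * Real.log ((2 * n : ℕ) : ℝ) := hlog
      _ ≤ ((pc (N + 1) : ℝ) + 1) * Real.log y := by
          apply mul_le_mul_of_nonneg_left hlogy (by positivity)
  have hny : y - 2 ≤ 2 * (n : ℝ) := by
    have h1 : N ≤ 2 * n + 1 := by omega
    have h2 : y < (N : ℝ) + 1 := Nat.lt_floor_add_one y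
    have h3 : (N : ℝ) ≤ 2 * (n : ℝ) + 1 := by exact_mod_cast h1
    linarith
  have hl4 : (1:ℝ) ≤ Real.log 4 := log_four_gt_one.le
  have hfinal : (y - 2) / 2 ≤ ((pc (N + 1) : ℝ) + 1) * Real.log y := by
    calc (y - 2) / 2 = ((y - 2) / 2) * 1 := by ring
      _ ≤ ((y - 2) / 2) * Real.log 4 := by
          apply mul_le_mul_of_nonneg_left hl4 (by linarith)
      _ ≤ (n : ℝ) * Real.log 4 := by
          apply mul_le_mul_of_nonneg_right (by linarith) (by linarith)
      _ ≤ _ := hstep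
  have h9 : (y - 2) / (2 * Real.log y) ≤ (pc (N + 1) : ℝ) + 1 := by
    rw [div_le_iff₀ (by positivity)]
    linarith
  linarith

lemma rUp (y : ℝ) (hy : 4 ≤ y) : (pc (⌊y⌋₊ + 1) : ℝ) ≤ 6 * y / Real.log y := by
  set M := ⌊y⌋₊ with hM
  have hy0 : (0:ℝ) ≤ y := by linarith
  have hM4 : 4 ≤ M := Nat.le_floor (by exact_mod_cast hy)
  set s := Nat.sqrt M with hs
  set k := ((Finset.Ioc s M).filter Nat.Prime).card with hk
  have hlogy0 : 0 < Real.log y := Real.log_pos (by linarith)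
  have hMy : (M : ℝ) ≤ y := Nat.floor_le hy0
  -- bound k
  have keyR : ((s + 1 : ℕ) : ℝ) ^ k ≤ (4:ℝ) ^ M := by exact_mod_cast chebUp M
  have hs1 : (0:ℝ) < ((s + 1 : ℕ) : ℝ) := by positivity
  have hklog : (k : ℝ) * Real.log ((s+1:ℕ)) ≤ (M : ℝ) * Real.log 4 := by
    have := Real.log_le_log (by positivity) keyR
    rw [Real.log_pow, Real.log_pow] at this
    exact_mod_cast this
  have hsq : y < ((s+1:ℕ):ℝ) ^ 2 := by
    have h1 : M < (s+1) * (s+1) := Nat.lt_succ_sqrt M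
    have h2 : y < (M:ℝ) + 1 := Nat.lt_floor_add_one y
    have h3 : ((M:ℝ) + 1) ≤ ((s+1:ℕ):ℝ)^2 := by
      have h4 : M + 1 ≤ (s+1)*(s+1) := by omega
      have h5 : ((M:ℝ) + 1) ≤ ((s:ℝ)+1)*((s:ℝ)+1) := by exact_mod_cast h4
      push_cast
      nlinarith [h5]
    linarith
  have hlogsq : Real.log y ≤ 2 * Real.log ((s+1:ℕ)) := by
    have := Real.log_le_log (by linarith : (0:ℝ) < y) hsq.le
    rw [Real.log_pow] at this
    push_cast at this ⊢
    linarith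
  have hlogs0 : 0 ≤ Real.log ((s+1:ℕ)) := Real.log_nonneg (by exact_mod_cast Nat.one_le_iff_ne_zero.2 (Nat.succ_ne_zero s))
  have hl4lt : Real.log 4 < 1.5 := log_four_lt
  have hklogy : (k : ℝ) * Real.log y ≤ 3 * y := by
    nlinarith [hklog, hlogsq, hlogs0, hMy, (by positivity : (0:ℝ) ≤ (M:ℝ)),
      mul_le_mul_of_nonneg_left hlogsq (by positivity : (0:ℝ) ≤ (k:ℝ))]
  have hsy : (s : ℝ) ≤ Real.sqrt y := by
    have h1 : s ^ 2 ≤ M := Nat.sqrt_le' M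
    have h3 : ((s:ℝ))^2 ≤ (M:ℝ) := by exact_mod_cast h1
    exact Real.le_sqrt_of_sq_le (by linarith)
  have hsys : Real.sqrt y * Real.sqrt y = y := Real.mul_self_sqrt hy0
  have hsy2 : 2 ≤ Real.sqrt y := by
    have : Real.sqrt 4 ≤ Real.sqrt y := Real.sqrt_le_sqrt hy
    rwa [show (4:ℝ) = 2^2 by norm_num, Real.sqrt_sq (by norm_num : (0:ℝ) ≤ 2)] at this
  have hlogsy : Real.log y ≤ Real.sqrt y := by
    set q := Real.sqrt (Real.sqrt y) with hq
    have hq0 : 0 < q := Real.sqrt_pos.2 (by linarith)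
    have hqq : q * q = Real.sqrt y := Real.mul_self_sqrt (Real.sqrt_nonneg y)
    have h1 : Real.log (Real.sqrt y) = Real.log y / 2 := Real.log_sqrt hy0
    have h2 : Real.log q = Real.log y / 4 := by
      rw [hq, Real.log_sqrt (Real.sqrt_nonneg y), h1]; ring
    have h3 : Real.log q ≤ q - 1 := Real.log_le_sub_one_of_pos hq0
    nlinarith [sq_nonneg (q - 2)]
  have hpc : (pc (M + 1) : ℝ) ≤ ((s:ℝ) + 1) + (k : ℝ) := by exact_mod_cast pcSplit M
  rw [le_div_iff₀ hlogy0]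
  nlinarith [hpc, hklogy, hlogsy, hsys, hsy2, hlogy0, hsy,
    mul_le_mul_of_nonneg_right hpc hlogy0.le,
    mul_le_mul_of_nonneg_right hsy hlogy0.le,
    mul_le_mul_of_nonneg_right hlogsy (Real.sqrt_nonneg y)]

/-- For every `m` there is a constant `C = C(m)` such that for every integer `A ≥ 3` the
interval `(log A, C log A]` contains at least `m` distinct primes none of which divides `A`. -/
theorem stmt15 (m : ℕ) :
    ∃ C : ℝ, 0 < C ∧ ∀ A : ℕ, 3 ≤ A →
      ∃ P : Finset ℕ, P.card = m ∧
        ∀ p ∈ P, p.Prime ∧ Real.log A < p ∧ (p : ℝ) ≤ C * Real.log A ∧ ¬ (p ∣ A) := by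
  classical
  obtain ⟨B, hB⟩ : ∃ B : ℕ, B = Nat.nth Nat.Prime (53 + m) := ⟨_, rfl⟩
  obtain ⟨C, hCdef⟩ : ∃ C : ℝ, C = 64 * ((m : ℝ) + 8) ^ 2 + B := ⟨_, rfl⟩
  have hm0 : (0:ℝ) ≤ (m:ℝ) := Nat.cast_nonneg m
  have hB0 : (0:ℝ) ≤ (B:ℝ) := Nat.cast_nonneg B
  have hC4096 : (4096:ℝ) ≤ C := by rw [hCdef]; nlinarith
  have hC0 : (0:ℝ) < C := by linarith
  have hBC : (B:ℝ) ≤ C := by rw [hCdef]; nlinarith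
  refine ⟨C, hC0, ?_⟩
  intro A hA
  have hA0 : 0 < A := by omega
  have hA3 : (3:ℝ) ≤ (A:ℝ) := by exact_mod_cast hA
  have hA0R : (0:ℝ) < (A:ℝ) := by linarith
  have hlogA1 : 1 < Real.log A := by
    have h1 : Real.exp 1 < (A:ℝ) := lt_of_lt_of_le (by
      have := Real.exp_one_lt_d9; linarith) hA3
    exact (Real.lt_log_iff_exp_lt hA0R).2 h1
  by_cases hsmall : A ≤ 54
  · -- small case
    refine ⟨(Finset.range m).image (fun i => Nat.nth Nat.Prime (53 + i)), ?_, ?_⟩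
    · rw [Finset.card_image_of_injOn, Finset.card_range]
      intro i _ j _ hij
      have := Nat.nth_injective Nat.infinite_setOf_prime hij
      omega
    · intro p hp
      obtain ⟨i, hi, rfl⟩ := Finset.mem_image.1 hp
      rw [Finset.mem_range] at hi
      have hprime : (Nat.nth Nat.Prime (53 + i)).Prime := Nat.prime_nth_prime _
      have h55 : 55 + i ≤ Nat.nth Nat.Prime (53 + i) := by
        have := Nat.add_two_le_nth_prime (53 + i); omega
      have hpB : Nat.nth Nat.Prime (53 + i) ≤ B := by
        rw [hB]; exact Nat.nth_monotone Nat.infinite_setOf_prime (by omega)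
      refine ⟨hprime, ?_, ?_, ?_⟩
      · have h1 : Real.log A < (A:ℝ) := by
          have := Real.log_le_sub_one_of_pos hA0R; linarith
        have h2 : (A:ℝ) ≤ 54 := by exact_mod_cast hsmall
        have h3 : (55:ℝ) ≤ (Nat.nth Nat.Prime (53 + i) : ℝ) := by
          exact_mod_cast le_trans (by omega) h55
        linarith
      · have h1 : (Nat.nth Nat.Prime (53 + i) : ℝ) ≤ (B:ℝ) := by exact_mod_cast hpB
        have h2 : C * 1 ≤ C * Real.log A :=
          mul_le_mul_of_nonneg_left hlogA1.le hC0.le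
        linarith
      · intro hdvd
        have := Nat.le_of_dvd hA0 hdvd
        omega
  · -- large case
    push_neg at hsmall
    set x := Real.log (A:ℝ) with hx
    have hx4 : 4 ≤ x := by
      have h55 : (55:ℝ) ≤ (A:ℝ) := by exact_mod_cast hsmall
      have hexp4 : Real.exp 4 ≤ 55 := by
        have h1 : Real.exp 1 < 2.7182818286 := Real.exp_one_lt_d9
        have h4 : Real.exp 4 = (Real.exp 1) ^ (4:ℕ) := by
          rw [← Real.exp_nat_mul]; norm_num
        rw [h4]
        have h5 : Real.exp 1 ^ (4:ℕ) < 2.7182818286 ^ (4:ℕ) :=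
          pow_lt_pow_left₀ h1 (Real.exp_pos 1).le (by norm_num)
        norm_num at h5 ⊢
        linarith
      calc (4:ℝ) = Real.log (Real.exp 4) := (Real.log_exp 4).symm
        _ ≤ Real.log A := Real.log_le_log (Real.exp_pos 4) (by linarith)
    have hx0 : (0:ℝ) < x := by linarith
    have hLx1 : 1 ≤ Real.log x := by
      have := log_four_gt_one
      have h2 : Real.log 4 ≤ Real.log x := Real.log_le_log (by norm_num) hx4
      linarith
    have hLx0 : (0:ℝ) < Real.log x := by linarith
    have hLxx : Real.log x < x := by
      have := Real.log_le_sub_one_of_pos hx0; linarith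
    set N := ⌊C * x⌋₊ with hN
    set M := ⌊x⌋₊ with hM
    have hCx0 : (0:ℝ) ≤ C * x := by positivity
    have hMN : M ≤ N := Nat.floor_le_floor (by nlinarith [hx0, hC4096])
    have hxM1 : x < (M:ℝ) + 1 := Nat.lt_floor_add_one x
    have hNCx : (N:ℝ) ≤ C * x := Nat.floor_le hCx0
    set G := (Finset.Ioc M N).filter (fun p => p.Prime ∧ ¬ p ∣ A) with hG
    set T := (Finset.Ioc M N).filter Nat.Prime with hT
    set D := (Finset.Ioc M N).filter (fun p => p.Prime ∧ p ∣ A) with hD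
    have hTG : T.card ≤ G.card + D.card := by
      have hsub : T ⊆ G ∪ D := by
        intro p hp
        rw [hT, Finset.mem_filter] at hp
        by_cases h : p ∣ A
        · exact Finset.mem_union_right _ (Finset.mem_filter.2 ⟨hp.1, hp.2, h⟩)
        · exact Finset.mem_union_left _ (Finset.mem_filter.2 ⟨hp.1, hp.2, h⟩)
      calc T.card ≤ (G ∪ D).card := Finset.card_le_card hsub
        _ ≤ G.card + D.card := Finset.card_union_le _ _
    have hpcT : pc (N + 1) ≤ pc (M + 1) + T.card := by
      have hsub : (Finset.range (N + 1)).filter Nat.Prime ⊆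
          ((Finset.range (M + 1)).filter Nat.Prime) ∪ T := by
        intro p hp
        obtain ⟨hpr, hpp⟩ := Finset.mem_filter.1 hp
        rw [Finset.mem_range] at hpr
        rcases le_or_gt p M with h | h
        · exact Finset.mem_union_left _
            (Finset.mem_filter.2 ⟨Finset.mem_range.2 (by omega), hpp⟩)
        · exact Finset.mem_union_right _
            (Finset.mem_filter.2 ⟨Finset.mem_Ioc.2 ⟨h, by omega⟩, hpp⟩)
      calc pc (N + 1) ≤ _ := Finset.card_le_card hsub
        _ ≤ _ := Finset.card_union_le _ _
    -- bound on D
    have hxp : ∀ p ∈ D, x ≤ (p:ℝ) := by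
      intro p hp
      have h1 := (Finset.mem_Ioc.1 (Finset.mem_filter.1 hp).1).1
      have h2 : (M:ℝ) + 1 ≤ (p:ℝ) := by exact_mod_cast h1
      linarith
    have hDbound : (D.card : ℝ) * Real.log x ≤ x := by
      have hdvd : (∏ p ∈ D, p) ∣ A :=
        Finset.prod_primes_dvd A (fun p hp => ((Finset.mem_filter.1 hp).2.1).prime)
          (fun p hp => (Finset.mem_filter.1 hp).2.2)
      have hprodle : (∏ p ∈ D, p) ≤ A := Nat.le_of_dvd hA0 hdvd
      have h1 : x ^ D.card ≤ ((∏ p ∈ D, p : ℕ) : ℝ) := by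
        rw [Nat.cast_prod, ← Finset.prod_const]
        exact Finset.prod_le_prod (fun _ _ => hx0.le) hxp
      have h2 : x ^ D.card ≤ (A:ℝ) := le_trans h1 (by exact_mod_cast hprodle)
      have h3 := Real.log_le_log (by positivity) h2
      rw [Real.log_pow] at h3
      rw [← hx] at h3
      exact_mod_cast h3
    have hDle : (D.card : ℝ) ≤ x / Real.log x := by
      rw [le_div_iff₀ hLx0]; exact hDbound
    -- pc bounds
    have hlow : (C * x - 2) / (2 * Real.log (C * x)) - 1 ≤ (pc (N + 1) : ℝ) :=
      rLow (C * x) (by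
        have := mul_le_mul hC4096 hx4 (by norm_num : (0:ℝ) ≤ 4) (by linarith : (0:ℝ) ≤ C)
        linarith)
    have hup : (pc (M + 1) : ℝ) ≤ 6 * x / Real.log x := rUp x hx4
    -- the key constant inequality
    set sC := Real.sqrt C with hsC
    have hsCsq : sC * sC = C := Real.mul_self_sqrt hC0.le
    have hsC8 : 8 * ((m:ℝ) + 8) ≤ sC := by
      have h1 : Real.sqrt (64 * ((m:ℝ) + 8) ^ 2) ≤ sC :=
        Real.sqrt_le_sqrt (by rw [hCdef]; linarith)
      rwa [show 64 * ((m:ℝ) + 8) ^ 2 = (8 * ((m:ℝ) + 8)) ^ 2 by ring,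
        Real.sqrt_sq (by positivity)] at h1
    have hsC0 : 0 < sC := Real.sqrt_pos.2 hC0
    have hlogC : Real.log C ≤ 2 * sC - 2 := by
      have h1 : Real.log sC = Real.log C / 2 := Real.log_sqrt hC0.le
      have h2 : Real.log sC ≤ sC - 1 := Real.log_le_sub_one_of_pos hsC0
      linarith
    have hCx16 : (16384:ℝ) ≤ C * x := by
      have := mul_le_mul hC4096 hx4 (by norm_num : (0:ℝ) ≤ 4) (by linarith : (0:ℝ) ≤ C)
      linarith
    have hLCpos : 0 < Real.log (C * x) := Real.log_pos (by linarith)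
    have hLC2 : Real.log (C * x) ≤ 2 * sC * Real.log x := by
      rw [Real.log_mul (ne_of_gt hC0) (ne_of_gt hx0)]
      have hsC1 : (1:ℝ) ≤ sC := by linarith [hsC8, hm0]
      have h7 : (2 * sC - 2) * 1 ≤ (2 * sC - 2) * Real.log x :=
        mul_le_mul_of_nonneg_left hLx1 (by linarith)
      linarith [hlogC, h7, hLx0]
    have hkey : ((m:ℝ) + 8) * x / Real.log x ≤ (C * x - 2) / (2 * Real.log (C * x)) := by
      rw [div_le_div_iff₀ hLx0 (by linarith : (0:ℝ) < 2 * Real.log (C * x))]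
      clear hxp hTG hpcT hDbound hDle
      · have k1 : ((m:ℝ) + 8) * x * (2 * Real.log (C * x)) ≤
            ((m:ℝ) + 8) * x * (4 * sC * Real.log x) := by
          apply mul_le_mul_of_nonneg_left _ (mul_nonneg (by positivity) hx0.le)
          linarith
        have k2 : ((m:ℝ) + 8) * (4 * sC) ≤ C / 2 := by
          have h8 := mul_le_mul_of_nonneg_right hsC8 hsC0.le
          clear * - h8 hsCsq
          nlinarith [hsCsq, h8]
        have k3 : (C / 2) * x ≤ C * x - 2 := by
          clear * - hCx16
          nlinarith [hCx16]
        calc ((m:ℝ) + 8) * x * (2 * Real.log (C * x))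
            ≤ ((m:ℝ) + 8) * x * (4 * sC * Real.log x) := k1
          _ = (((m:ℝ) + 8) * (4 * sC)) * (x * Real.log x) := by ring
          _ ≤ (C / 2) * (x * Real.log x) := by
              apply mul_le_mul_of_nonneg_right k2 (mul_nonneg hx0.le hLx0.le)
          _ = ((C / 2) * x) * Real.log x := by ring
          _ ≤ (C * x - 2) * Real.log x := by
              apply mul_le_mul_of_nonneg_right k3 hLx0.le
    -- combine
    have hu1 : 1 ≤ x / Real.log x := (one_le_div hLx0).2 hLxx.le
    have hGm : (m:ℝ) ≤ (G.card : ℝ) := by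
      have c1 : (T.card : ℝ) ≤ (G.card : ℝ) + (D.card : ℝ) := by exact_mod_cast hTG
      have c2 : (pc (N + 1) : ℝ) ≤ (pc (M + 1) : ℝ) + (T.card : ℝ) := by exact_mod_cast hpcT
      have c3 : ((m:ℝ) + 8) * (x / Real.log x) - 1 ≤ (pc (N + 1) : ℝ) := by
        have h := hkey
        rw [mul_div_assoc] at h
        linarith [hlow]
      have c4 : 6 * x / Real.log x = 6 * (x / Real.log x) := by ring
      rw [c4] at hup
      have c5 : ((m:ℝ) + 1) * 1 ≤ ((m:ℝ) + 1) * (x / Real.log x) :=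
        mul_le_mul_of_nonneg_left hu1 (by positivity)
      clear * - c1 c2 c3 c5 hup hDle
      linarith [c1, c2, c3, c5, hup, hDle]
    have hGcard : m ≤ G.card := by exact_mod_cast hGm
    obtain ⟨P, hPsub, hPcard⟩ := Finset.exists_subset_card_eq hGcard
    refine ⟨P, hPcard, ?_⟩
    intro p hp
    have hpG := hPsub hp
    rw [hG, Finset.mem_filter, Finset.mem_Ioc] at hpG
    obtain ⟨⟨hMp, hpN⟩, hpr, hnd⟩ := hpG
    refine ⟨hpr, ?_, ?_, hnd⟩
    · have h1 : (M:ℝ) + 1 ≤ (p:ℝ) := by exact_mod_cast hMp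
      linarith
    · have h1 : (p:ℝ) ≤ (N:ℝ) := by exact_mod_cast hpN
      linarith
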